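/- For all integers b ≥ 0 and r ≥ 1, with g = 2b + r − 1: 2^(2b)·N_even = 2^(g−1)·(2^(g−2b) + 1) and 2^(2b)·N_odd = 2^(g−1)·(2^(g−2b) − 1), where N_even (resp. N_odd) is the number of subsets E of a 2r-element set R with |E| ≡ r (mod 2), counted up to the identification E ∼ R∖E, such that (r − |E|)/2 is even (resp. odd). -/

import Mathlib

/-!
Conditions `|E| ≡ r (mod 2)` and `(r - |E|)/2` even (resp. odd) say `|E| ≡ r` (resp. `r + 2`)
mod 4. Subsets of a `2r`-set are counted by cardinality mod 4 with the roots-of-unity filter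
`4 · #{E : |E| ≡ j mod 4} = ∑_{ω⁴ = 1} ω⁻ʲ (1 + ω)^(2r)`. The term `ω = -1` vanishes, and since
`(1 ± I)² = ±2I`, each of `ω = ±I` contributes `±2^r`, so `8 N_even = 2^(2r) + 2^(r+1)` and
`8 N_odd = 2^(2r) - 2^(r+1)`.
-/

open Finset

theorem IsPrimitiveRoot.sum_range_pow_mul_inv_pow {K : Type*} [Field K] {ζ : K} {n : ℕ}
    (hζ : IsPrimitiveRoot ζ n) (k j : ℕ) :
    ∑ m ∈ range n, (ζ ^ k * ζ⁻¹ ^ j) ^ m = if k ≡ j [MOD n] then (n : K) else 0 := by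
  rcases Nat.eq_zero_or_pos n with rfl | hn
  · simp
  have hx : ζ ^ k * ζ⁻¹ ^ j = ζ ^ ((k : ℤ) - j) := by
    rw [zpow_sub₀ (hζ.ne_zero hn.ne'), zpow_natCast, zpow_natCast, div_eq_mul_inv, inv_pow]
  have hx_eq_one : ζ ^ k * ζ⁻¹ ^ j = 1 ↔ k ≡ j [MOD n] := by
    rw [hx, hζ.zpow_eq_one_iff_dvd, Nat.modEq_iff_dvd, ← dvd_neg, neg_sub]
  split_ifs with h
  · rw [hx_eq_one.mpr h]; simp
  · have hxn : (ζ ^ k * ζ⁻¹ ^ j) ^ n = 1 := by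
      rw [hx, ← zpow_natCast, ← zpow_mul, mul_comm, zpow_mul, zpow_natCast, hζ.pow_eq_one, one_zpow]
    rw [geom_sum_eq (mt hx_eq_one.mp h), hxn, sub_self, zero_div]

theorem IsPrimitiveRoot.mul_card_filter_powerset_card_modEq {ι K : Type*} [Field K] {ζ : K}
    {n : ℕ} (hζ : IsPrimitiveRoot ζ n) (s : Finset ι) (j : ℕ) :
    (n * #{E ∈ s.powerset | #E ≡ j [MOD n]} : K) =
      ∑ m ∈ range n, (ζ⁻¹ ^ j) ^ m * (ζ ^ m + 1) ^ #s := by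
  calc (n * #{E ∈ s.powerset | #E ≡ j [MOD n]} : K)
      = ∑ E ∈ s.powerset, ∑ m ∈ range n, (ζ ^ #E * ζ⁻¹ ^ j) ^ m := by
        simp only [natCast_card_filter, mul_sum, mul_ite, mul_one, mul_zero,
          hζ.sum_range_pow_mul_inv_pow]
    _ = ∑ m ∈ range n, (ζ⁻¹ ^ j) ^ m * ∑ E ∈ s.powerset, (ζ ^ m) ^ #E * 1 ^ (#s - #E) := by
        rw [sum_comm]
        simp only [mul_sum, one_pow, mul_one, mul_pow, ← pow_mul, mul_comm]
    _ = _ := by simp only [sum_pow_mul_eq_add_pow]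

open Complex in
theorem four_mul_card_filter_powerset_card_modEq {ι : Type*} (s : Finset ι) {r : ℕ}
    (hr : r ≠ 0) (hs : #s = 2 * r) (i : ℕ) :
    (4 * #{E ∈ s.powerset | #E ≡ r + 2 * i [MOD 4]} : ℤ) =
      2 ^ (2 * r) + 2 * (-1) ^ i * 2 ^ r := by
  -- the terms `ω⁻ʲ (1 + ω)^(2r)` for `ω = ±I`, written with `z = ω⁻¹` and `w = (1 + ω)²`
  have hterm : ∀ z w : ℂ, z ^ 2 = -1 → z * w = 2 → z ^ (r + 2 * i) * w ^ r = (-1) ^ i * 2 ^ r :=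
    fun z w hz hzw => by rw [pow_add, pow_mul, hz, mul_right_comm, ← mul_pow, hzw, mul_comm]
  have h := isPrimitiveRoot_I.mul_card_filter_powerset_card_modEq s (r + 2 * i)
  have hI : (I + 1) ^ (2 * r) = (2 * I) ^ r := by
    rw [pow_mul]; congr 1; linear_combination I_sq
  have hneg_one : (I ^ 2 + 1) ^ (2 * r) = 0 := by
    rw [I_sq, neg_add_cancel, zero_pow (by omega)]
  have hneg_I : (I ^ 3 + 1) ^ (2 * r) = (-2 * I) ^ r := by
    rw [pow_mul]; congr 1; linear_combination (I ^ 4 - I ^ 2 + 1 + 2 * I) * I_sq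
  have hcube : ∀ j : ℕ, ((-I) ^ j) ^ 3 = I ^ j := fun j => by
    rw [← pow_mul, mul_comm, pow_mul]; congr 1; linear_combination -I * I_sq
  simp only [sum_range_succ, sum_range_zero, zero_add, pow_zero, pow_one, one_mul, inv_I, hs] at h
  rw [hI, hneg_one, hneg_I, hcube,
    hterm _ _ (by rw [neg_sq, I_sq]) (by linear_combination -2 * I_sq),
    hterm _ _ I_sq (by linear_combination -2 * I_sq)] at h
  have h' : (4 * #{E ∈ s.powerset | #E ≡ r + 2 * i [MOD 4]} : ℂ) =
      ((2 ^ (2 * r) + 2 * (-1) ^ i * 2 ^ r : ℤ) : ℂ) := by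
    push_cast at h ⊢; linear_combination h
  exact_mod_cast h'

theorem mod_two_eq_and_even_sub_div_two_iff {k r : ℕ} :
    k % 2 = r % 2 ∧ Even (((r : ℤ) - k) / 2) ↔ k ≡ r [MOD 4] := by
  rw [Int.even_iff, Nat.ModEq]; omega

theorem mod_two_eq_and_odd_sub_div_two_iff {k r : ℕ} :
    k % 2 = r % 2 ∧ Odd (((r : ℤ) - k) / 2) ↔ k ≡ r + 2 [MOD 4] := by
  rw [Int.odd_iff, Nat.ModEq]; omega

theorem stmt_9_general {α : Type*} [Fintype α] (b r : ℕ) (hr : 1 ≤ r)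
    (hcard : Fintype.card α = 2 * r) (g : ℤ) (hg : g = 2 * b + r - 1)
    (Neven Nodd : ℕ)
    (hNe : 2 * Neven = ((Finset.univ : Finset α).powerset.filter
      (fun E => E.card % 2 = r % 2 ∧ Even (((r : ℤ) - E.card) / 2))).card)
    (hNo : 2 * Nodd = ((Finset.univ : Finset α).powerset.filter
      (fun E => E.card % 2 = r % 2 ∧ Odd (((r : ℤ) - E.card) / 2))).card) :
    (2 : ℚ) ^ (2 * b) * Neven = (2 : ℚ) ^ (g - 1) * ((2 : ℚ) ^ (g - 2 * b) + 1) ∧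
    (2 : ℚ) ^ (2 * b) * Nodd = (2 : ℚ) ^ (g - 1) * ((2 : ℚ) ^ (g - 2 * b) - 1) := by
  have hs : #(univ : Finset α) = 2 * r := by rw [card_univ, hcard]
  have hA := four_mul_card_filter_powerset_card_modEq univ (by omega) hs 0
  have hB := four_mul_card_filter_powerset_card_modEq univ (by omega) hs 1
  rw [filter_congr fun E _ => mod_two_eq_and_even_sub_div_two_iff] at hNe
  rw [filter_congr fun E _ => mod_two_eq_and_odd_sub_div_two_iff] at hNo
  simp only [mul_zero, add_zero, mul_one, pow_zero, pow_one, ← hNe, ← hNo] at hA hB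
  have hE : (8 * Neven : ℤ) = 2 ^ (2 * r) + 2 * 2 ^ r := by push_cast at hA; linear_combination hA
  have hO : (8 * Nodd : ℤ) = 2 ^ (2 * r) - 2 * 2 ^ r := by push_cast at hB; linear_combination hB
  qify at hE hO
  have hg1 : (2 : ℚ) ^ (g - 1) = 2 ^ (2 * b) * 2 ^ r / 4 := by
    rw [hg, show (2 * b + r - 1 : ℤ) - 1 = ((2 * b + r : ℕ) : ℤ) - 2 by push_cast; ring,
      zpow_sub₀ two_ne_zero, zpow_natCast, pow_add]
    norm_num
  have hg2 : (2 : ℚ) ^ (g - 2 * b) = 2 ^ r / 2 := by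
    rw [hg, show (2 * b + r - 1 : ℤ) - 2 * b = (r : ℤ) - 1 by ring, zpow_sub₀ two_ne_zero,
      zpow_natCast, zpow_one]
  rw [hg1, hg2]
  constructor
  · linear_combination 2 ^ (2 * b) / 8 * hE
  · linear_combination 2 ^ (2 * b) / 8 * hO

/-- Counting underlying Proposition 3(a): on a set `R` of cardinality `2r`, the number
`N_even` (resp. `N_odd`) of subsets `E` with `|E| ≡ r (mod 2)` and `(r−|E|)/2` even
(resp. odd), counted up to the identification `E ∼ R∖E` (so each such subset is counted
with weight `1/2`, i.e. `2·N` is the plain count), satisfies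
`2^(2b)·N_even = 2^(g−1)(2^(g−2b)+1)` and `2^(2b)·N_odd = 2^(g−1)(2^(g−2b)−1)`,
where `g = 2b + r − 1`. -/
theorem stmt_9 {α : Type*} [Fintype α] [DecidableEq α] (b r : ℕ) (hr : 1 ≤ r)
    (hcard : Fintype.card α = 2 * r) (g : ℤ) (hg : g = 2 * b + r - 1)
    (Neven Nodd : ℕ)
    (hNe : 2 * Neven = ((Finset.univ : Finset α).powerset.filter
      (fun E => E.card % 2 = r % 2 ∧ Even (((r : ℤ) - E.card) / 2))).card)
    (hNo : 2 * Nodd = ((Finset.univ : Finset α).powerset.filter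
      (fun E => E.card % 2 = r % 2 ∧ Odd (((r : ℤ) - E.card) / 2))).card) :
    (2 : ℚ) ^ (2 * b) * Neven = (2 : ℚ) ^ (g - 1) * ((2 : ℚ) ^ (g - 2 * b) + 1) ∧
    (2 : ℚ) ^ (2 * b) * Nodd = (2 : ℚ) ^ (g - 1) * ((2 : ℚ) ^ (g - 2 * b) - 1) :=
  stmt_9_general b r hr hcard g hg Neven Nodd hNe hNo
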